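/- Let U_s : [-1,1] → ℝ be smooth. Define on L²(𝕋_M × (-1,1)) × L²(𝕋_M × (-1,1)) the operator B₀(ϱ, ω) = (-U_s ∂_x ϱ, -U_s ∂_x ω + ∂_x ϱ). Then B₀ generates a strongly continuous semigroup given explicitly by (e^{tB₀}(ϱ,ω))(x,z) = ( ϱ(x - t U_s(z), z), ω(x - t U_s(z), z) + t ∂_x ϱ(x - t U_s(z), z) ), and for every β > 0 and every k ≥ 0 there exists C_{k,β} > 0 such that ‖e^{tB₀}(ϱ,ω)‖_{H^{k+1} × H^k} ≤ C_{k,β} e^{βt} ‖(ϱ,ω)‖_{H^{k+1} × H^k} for all t ≥ 0. -/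

import Mathlib

open Set MeasureTheory

/-- Partial derivative in the horizontal variable `x`. -/
noncomputable def partialX (f : ℝ × ℝ → ℝ) : ℝ × ℝ → ℝ :=
  fun p => deriv (fun x => f (x, p.2)) p.1

/-- The channel `𝕋_M × (-1,1)`, realized as the fundamental domain
`(0, 2πM) × (-1,1)`. -/
def channel (M : ℝ) : Set (ℝ × ℝ) :=
  Ioo (0:ℝ) (2*Real.pi*M) ×ˢ Ioo (-1:ℝ) 1

/-- The `H^k` Sobolev norm on the channel. -/
noncomputable def Hnorm (M : ℝ) (k : ℕ) (f : ℝ × ℝ → ℝ) : ℝ :=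
  Real.sqrt (∑ i ∈ Finset.range (k+1),
    ∫ p in channel M, ‖iteratedFDeriv ℝ i f p‖^2)

/-- `2πM`-periodicity in the horizontal variable. -/
def PeriodicX (M : ℝ) (f : ℝ × ℝ → ℝ) : Prop :=
  ∀ x z : ℝ, f (x + 2*Real.pi*M, z) = f (x, z)

/-- First component of the semigroup `e^{tB₀}`: `ϱ(x - tU_s(z), z)`. -/
noncomputable def Eρ (U : ℝ → ℝ) (t : ℝ) (ϱ : ℝ × ℝ → ℝ) : ℝ × ℝ → ℝ :=
  fun p => ϱ (p.1 - t * U p.2, p.2)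

/-- Second component of the semigroup `e^{tB₀}`:
`ω(x - tU_s(z), z) + t ∂_x ϱ(x - tU_s(z), z)`. -/
noncomputable def Eω (U : ℝ → ℝ) (t : ℝ) (ϱ ω : ℝ × ℝ → ℝ) : ℝ × ℝ → ℝ :=
  fun p => ω (p.1 - t * U p.2, p.2) + t * partialX ϱ (p.1 - t * U p.2, p.2)



lemma partialX_eq {f : ℝ × ℝ → ℝ} {p : ℝ × ℝ} (hf : DifferentiableAt ℝ f p) :
    partialX f p = fderiv ℝ f p (1, 0) := by
  have h1 : HasDerivAt (fun x : ℝ => (x, p.2)) ((1:ℝ), (0:ℝ)) p.1 :=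
    (hasDerivAt_id p.1).prodMk (hasDerivAt_const p.1 p.2)
  have h2 : HasFDerivAt f (fderiv ℝ f p) (p.1, p.2) := by
    simpa using hf.hasFDerivAt
  exact (h2.comp_hasDerivAt p.1 h1).deriv

lemma contDiff_partialX {f : ℝ × ℝ → ℝ} (hf : ContDiff ℝ (⊤ : ℕ∞) f) :
    ContDiff ℝ (⊤ : ℕ∞) (partialX f) := by
  have hd : Differentiable ℝ f := hf.differentiable (by simp)
  have h1 : ContDiff ℝ (⊤ : ℕ∞) (fderiv ℝ f) := hf.fderiv_right (by simp)
  have h2 : partialX f = fun p => fderiv ℝ f p (1, 0) :=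
    funext fun p => partialX_eq (hd p)
  rw [h2]
  exact h1.clm_apply contDiff_const

lemma periodicX_partialX {M : ℝ} {f : ℝ × ℝ → ℝ} (hper : PeriodicX M f) :
    PeriodicX M (partialX f) := by
  intro x z
  show deriv (fun y => f (y, z)) (x + 2*Real.pi*M) = deriv (fun y => f (y, z)) x
  calc deriv (fun y => f (y, z)) (x + 2*Real.pi*M)
      = deriv (fun y => f (y + 2*Real.pi*M, z)) x := (deriv_comp_add_const _ _ _).symm
    _ = deriv (fun y => f (y, z)) x := by
        congr 1
        funext y
        exact hper y z

lemma iteratedFDeriv_translate {f : ℝ × ℝ → ℝ} (hf : ContDiff ℝ (⊤ : ℕ∞) f) (c : ℝ × ℝ) :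
    ∀ (n : ℕ) (x : ℝ × ℝ),
      iteratedFDeriv ℝ n (fun y => f (y + c)) x = iteratedFDeriv ℝ n f (x + c) := by
  intro n
  induction n with
  | zero =>
      intro x
      ext m
      simp
  | succ n ih =>
      intro x
      have hfun : (iteratedFDeriv ℝ n fun y => f (y + c))
          = fun y => iteratedFDeriv ℝ n f (y + c) := funext ih
      have hcast : ((n : ℕ∞) : WithTop ℕ∞) < (⊤ : WithTop ℕ∞) := by
        exact_mod_cast WithTop.coe_lt_top (n : ℕ∞)
      have hdiff : DifferentiableAt ℝ (iteratedFDeriv ℝ n f) (x + c) :=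
        (hf.differentiable_iteratedFDeriv (by exact_mod_cast (ENat.coe_lt_top n))).differentiableAt
      have hder : fderiv ℝ (fun y => iteratedFDeriv ℝ n f (y + c)) x
          = fderiv ℝ (iteratedFDeriv ℝ n f) (x + c) := by
        have h1 : HasFDerivAt (fun y : ℝ × ℝ => y + c)
            (ContinuousLinearMap.id ℝ (ℝ × ℝ)) x := (hasFDerivAt_id x).add_const c
        have h2 := hdiff.hasFDerivAt.comp x h1
        simpa [Function.comp_def] using h2.fderiv
      rw [iteratedFDeriv_succ_eq_comp_left, iteratedFDeriv_succ_eq_comp_left,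
        Function.comp_apply, Function.comp_apply, hfun, hder]


lemma sqrt_add_le' (x y : ℝ) (hx : 0 ≤ x) (hy : 0 ≤ y) :
    Real.sqrt (x + y) ≤ Real.sqrt x + Real.sqrt y := by
  have h := Real.sqrt_le_sqrt (show x + y ≤ (Real.sqrt x + Real.sqrt y)^2 by
    have hx' := Real.sq_sqrt hx
    have hy' := Real.sq_sqrt hy
    nlinarith [Real.sqrt_nonneg x, Real.sqrt_nonneg y])
  rwa [Real.sqrt_sq (by positivity)] at h

lemma pow_le_exp_aux (m : ℕ) {x : ℝ} (hx : 0 ≤ x) :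
    x ^ m ≤ m.factorial * Real.exp x := by
  have h2 : x ^ m / m.factorial ≤ ∑ i ∈ Finset.range (m+1), x ^ i / i.factorial :=
    Finset.single_le_sum (f := fun i => x ^ i / (i.factorial : ℝ))
      (fun i _ => by positivity) (Finset.self_mem_range_succ m)
  have h := h2.trans (Real.sum_le_exp_of_nonneg hx (m+1))
  have hm : (0:ℝ) < m.factorial := by exact_mod_cast m.factorial_pos
  calc x ^ m = m.factorial * (x ^ m / m.factorial) := by field_simp
    _ ≤ m.factorial * Real.exp x := by
        exact mul_le_mul_of_nonneg_left h hm.le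

lemma growth_aux {β : ℝ} (hβ : 0 < β) (m : ℕ) {a : ℝ} (ha : 0 ≤ a) :
    ∃ C : ℝ, 0 < C ∧ ∀ t : ℝ, 0 ≤ t → (1 + a*t)^m ≤ C * Real.exp (β*t) := by
  have hfac : (0:ℝ) < m.factorial := by exact_mod_cast m.factorial_pos
  refine ⟨(1+a)^m * 2^m * (1 + m.factorial / β^m), by positivity, fun t ht => ?_⟩
  have h2m : (0:ℝ) < 2^m := by positivity
  have e1 : (1 + a*t)^m ≤ ((1+a)*(1+t))^m :=
    pow_le_pow_left₀ (by positivity) (by nlinarith) m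
  have e2 : (1+t)^m ≤ 2^m * (1 + t^m) := by
    rcases le_total t 1 with h | h
    · have h1 : (1+t)^m ≤ 2^m := pow_le_pow_left₀ (by positivity) (by linarith) m
      have h2 : (0:ℝ) ≤ t^m := by positivity
      nlinarith
    · have h1 : (1+t)^m ≤ (2*t)^m := pow_le_pow_left₀ (by positivity) (by linarith) m
      have h2 : ((2:ℝ)*t)^m = 2^m * t^m := mul_pow 2 t m
      nlinarith
  have e3 : t^m ≤ (m.factorial / β^m) * Real.exp (β*t) := by
    have h := pow_le_exp_aux m (mul_nonneg hβ.le ht)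
    rw [mul_pow] at h
    have hb : (0:ℝ) < β^m := by positivity
    rw [div_mul_eq_mul_div, le_div_iff₀ hb]
    nlinarith
  have e4 : (1:ℝ) ≤ Real.exp (β*t) := Real.one_le_exp (by positivity)
  have e5 : (0:ℝ) ≤ (1+a)^m := by positivity
  calc (1 + a*t)^m ≤ ((1+a)*(1+t))^m := e1
    _ = (1+a)^m * (1+t)^m := mul_pow _ _ _
    _ ≤ (1+a)^m * (2^m * (1 + t^m)) := by
        exact mul_le_mul_of_nonneg_left e2 e5
    _ ≤ (1+a)^m * (2^m * (Real.exp (β*t) + (m.factorial / β^m) * Real.exp (β*t))) := by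
        have : 1 + t^m ≤ Real.exp (β*t) + (m.factorial / β^m) * Real.exp (β*t) :=
          add_le_add e4 e3
        exact mul_le_mul_of_nonneg_left (mul_le_mul_of_nonneg_left this h2m.le) e5
    _ = (1+a)^m * 2^m * (1 + m.factorial / β^m) * Real.exp (β*t) := by ring

variable {M : ℝ}



lemma integrableOn_channel {F : ℝ × ℝ → ℝ} (hF : Continuous F) :
    IntegrableOn F (channel M) := by
  have hcomp : IsCompact (Icc (0:ℝ) (2*Real.pi*M) ×ˢ Icc (-1:ℝ) 1) :=
    isCompact_Icc.prod isCompact_Icc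
  exact (hF.continuousOn.integrableOn_compact hcomp).mono_set
    (Set.prod_mono Ioo_subset_Icc_self Ioo_subset_Icc_self)

lemma channel_eq_iterated {F : ℝ × ℝ → ℝ} (hF : Continuous F) :
    ∫ p in channel M, F p
      = ∫ z in Ioo (-1:ℝ) 1, ∫ x in Ioo (0:ℝ) (2*Real.pi*M), F (x, z) := by
  have hInt : IntegrableOn F (channel M) := integrableOn_channel hF
  unfold channel at hInt ⊢
  have hInt0 : Integrable F
      ((volume.restrict (Ioo (0:ℝ) (2*Real.pi*M))).prod (volume.restrict (Ioo (-1:ℝ) 1))) := by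
    rw [Measure.prod_restrict, ← Measure.volume_eq_prod]; exact hInt
  calc ∫ p in Ioo (0:ℝ) (2*Real.pi*M) ×ˢ Ioo (-1:ℝ) 1, F p
      = ∫ p, F p ∂((volume.restrict (Ioo (0:ℝ) (2*Real.pi*M))).prod
          (volume.restrict (Ioo (-1:ℝ) 1))) := by
        rw [Measure.prod_restrict, ← Measure.volume_eq_prod]
    _ = ∫ q, F q.swap ∂((volume.restrict (Ioo (-1:ℝ) 1)).prod
          (volume.restrict (Ioo (0:ℝ) (2*Real.pi*M)))) := (integral_prod_swap F).symm
    _ = ∫ z in Ioo (-1:ℝ) 1, ∫ x in Ioo (0:ℝ) (2*Real.pi*M), F (x, z) := by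
        exact integral_prod _ hInt0.swap



lemma shift_integral (hM : 0 < M) {g : ℝ × ℝ → ℝ} (hg : Continuous g)
    (hper : PeriodicX M g) {c : ℝ → ℝ} (hc : Continuous c) :
    ∫ p in channel M, g (p.1 - c p.2, p.2) = ∫ p in channel M, g p := by
  have hLpos : 0 < 2*Real.pi*M := by positivity
  have h1 : Continuous (fun p : ℝ × ℝ => g (p.1 - c p.2, p.2)) :=
    hg.comp ((continuous_fst.sub (hc.comp continuous_snd)).prodMk continuous_snd)
  rw [channel_eq_iterated h1, channel_eq_iterated hg]
  congr 1
  funext z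
  have hper' : Function.Periodic (fun x => g (x, z)) (2*Real.pi*M) := fun x => hper x z
  rw [← MeasureTheory.integral_Ioc_eq_integral_Ioo, ← MeasureTheory.integral_Ioc_eq_integral_Ioo,
    ← intervalIntegral.integral_of_le hLpos.le, ← intervalIntegral.integral_of_le hLpos.le]
  rw [intervalIntegral.integral_comp_sub_right (fun x => g (x, z)) (c z)]
  rw [show (0:ℝ) - c z = -(c z) by ring, show 2*Real.pi*M - c z = -(c z) + 2*Real.pi*M by ring]
  rw [hper'.intervalIntegral_add_eq (-(c z)) 0, zero_add]

lemma sigma_deriv_bound {t : ℝ} (ht : 0 ≤ t) {U : ℝ → ℝ} (hU : ContDiff ℝ (⊤ : ℕ∞) U) {A : ℝ}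
    {i : ℕ} (hi1 : 1 ≤ i)
    (hBA : ∀ z ∈ Icc (-1:ℝ) 1, ‖iteratedFDeriv ℝ i U z‖ ≤ A)
    (p : ℝ × ℝ) (hp : p.2 ∈ Icc (-1:ℝ) 1) :
    ‖iteratedFDeriv ℝ i (fun p : ℝ × ℝ => (p.1 - t * U p.2, p.2)) p‖ ≤ 1 + A * t := by
  set φ : ℝ × ℝ → ℝ × ℝ := fun q => ((t * U q.2 : ℝ), (0:ℝ)) with hφ
  have hφs : ContDiff ℝ (⊤ : ℕ∞) φ :=
    (contDiff_const.mul (hU.comp contDiff_snd)).prodMk contDiff_const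
  have hσeq : (fun p : ℝ × ℝ => (p.1 - t * U p.2, p.2)) = fun q => q + -(φ q) := by
    funext q
    simp [φ, Prod.ext_iff]
    ring
  rw [hσeq]
  rw [iteratedFDeriv_add_apply' (f := fun q : ℝ × ℝ => q) (g := fun q => -(φ q))
    (by exact contDiff_id.contDiffAt) (by exact (hφs.of_le (by exact_mod_cast le_top)).neg.contDiffAt)]
  have hIdBound : ‖iteratedFDeriv ℝ i (fun q : ℝ × ℝ => q) p‖ ≤ 1 := by
    obtain ⟨m, rfl⟩ : ∃ m, i = m + 1 := ⟨i - 1, by omega⟩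
    rw [← norm_iteratedFDeriv_fderiv]
    have hfd : (fderiv ℝ (fun q : ℝ × ℝ => q)) = fun _ => ContinuousLinearMap.id ℝ (ℝ × ℝ) :=
      funext fun q => fderiv_id'
    rw [hfd]
    cases m with
    | zero =>
        rw [norm_iteratedFDeriv_zero]
        exact ContinuousLinearMap.norm_id_le
    | succ m' =>
        rw [iteratedFDeriv_const_of_ne (Nat.succ_ne_zero m')]
        simp
  have hPhiBound : ‖iteratedFDeriv ℝ i (fun q => -(φ q)) p‖ ≤ A * t := by
    have hneg : (fun q => -(φ q)) = -φ := rfl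
    rw [hneg, iteratedFDeriv_neg_apply, norm_neg]
    have hh : ContDiff ℝ (⊤ : ℕ∞) (fun q : ℝ × ℝ => t * U q.2) :=
      contDiff_const.mul (hU.comp contDiff_snd)
    have hφeq : φ = (ContinuousLinearMap.inl ℝ ℝ ℝ) ∘ (fun q : ℝ × ℝ => t * U q.2) := by
      funext q
      simp [φ]
    rw [hφeq, ContinuousLinearMap.iteratedFDeriv_comp_left _ hh.contDiffAt (by exact_mod_cast le_top)]
    have hinl : ‖ContinuousLinearMap.inl ℝ ℝ ℝ‖ ≤ 1 :=
      ContinuousLinearMap.opNorm_le_bound _ zero_le_one (fun x => by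
        simp [Prod.norm_def])
    calc ‖(ContinuousLinearMap.inl ℝ ℝ ℝ).compContinuousMultilinearMap
            (iteratedFDeriv ℝ i (fun q : ℝ × ℝ => t * U q.2) p)‖
        ≤ ‖ContinuousLinearMap.inl ℝ ℝ ℝ‖ * ‖iteratedFDeriv ℝ i (fun q : ℝ × ℝ => t * U q.2) p‖ :=
          ContinuousLinearMap.norm_compContinuousMultilinearMap_le _ _
      _ ≤ 1 * ‖iteratedFDeriv ℝ i (fun q : ℝ × ℝ => t * U q.2) p‖ := by
          exact mul_le_mul_of_nonneg_right hinl (norm_nonneg _)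
      _ = ‖iteratedFDeriv ℝ i (fun q : ℝ × ℝ => t * U q.2) p‖ := one_mul _
      _ ≤ A * t := by
          have hueq : (fun q : ℝ × ℝ => t * U q.2)
              = (fun z => t * U z) ∘ (ContinuousLinearMap.snd ℝ ℝ ℝ) := rfl
          have hu : ContDiff ℝ (⊤ : ℕ∞) (fun z : ℝ => t * U z) := contDiff_const.mul hU
          rw [hueq, ContinuousLinearMap.iteratedFDeriv_comp_right _ hu p (by exact_mod_cast le_top)]
          calc ‖(iteratedFDeriv ℝ i (fun z => t * U z) ((ContinuousLinearMap.snd ℝ ℝ ℝ) p)).compContinuousLinearMap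
                  (fun _ => ContinuousLinearMap.snd ℝ ℝ ℝ)‖
              ≤ ‖iteratedFDeriv ℝ i (fun z => t * U z) p.2‖ * ∏ _j : Fin i, ‖ContinuousLinearMap.snd ℝ ℝ ℝ‖ :=
                ContinuousMultilinearMap.norm_compContinuousLinearMap_le _ _
            _ ≤ ‖iteratedFDeriv ℝ i (fun z => t * U z) p.2‖ * 1 := by
                refine mul_le_mul_of_nonneg_left ?_ (norm_nonneg _)
                exact Finset.prod_le_one (fun _ _ => norm_nonneg _)
                  (fun _ _ => ContinuousLinearMap.norm_snd_le _ _ _)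
            _ = ‖iteratedFDeriv ℝ i (fun z => t * U z) p.2‖ := mul_one _
            _ ≤ A * t := by
                have hsmul : (fun z : ℝ => t * U z) = t • U := by
                  funext z; simp
                rw [hsmul, iteratedFDeriv_const_smul_apply (hU.of_le (by exact_mod_cast le_top)).contDiffAt]
                rw [norm_smul t (iteratedFDeriv ℝ i U p.2), Real.norm_eq_abs, abs_of_nonneg ht]
                calc t * ‖iteratedFDeriv ℝ i U p.2‖ ≤ t * A :=
                      mul_le_mul_of_nonneg_left (hBA p.2 hp) ht
                  _ = A * t := mul_comm _ _
  calc ‖iteratedFDeriv ℝ i (fun q : ℝ × ℝ => q) p + iteratedFDeriv ℝ i (fun q => -(φ q)) p‖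
      ≤ ‖iteratedFDeriv ℝ i (fun q : ℝ × ℝ => q) p‖ + ‖iteratedFDeriv ℝ i (fun q => -(φ q)) p‖ :=
        norm_add_le _ _
    _ ≤ 1 + A * t := add_le_add hIdBound hPhiBound

section Aux
variable {M : ℝ}

lemma Hsum_nonneg (M : ℝ) (k : ℕ) (f : ℝ × ℝ → ℝ) :
    0 ≤ ∑ i ∈ Finset.range (k+1), ∫ p in channel M, ‖iteratedFDeriv ℝ i f p‖^2 :=
  Finset.sum_nonneg fun i _ => integral_nonneg (fun p => by positivity)

lemma Hnorm_nonneg (M : ℝ) (k : ℕ) (f : ℝ × ℝ → ℝ) : 0 ≤ Hnorm M k f :=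
  Real.sqrt_nonneg _

lemma periodic_norm_iteratedFDeriv {f : ℝ × ℝ → ℝ} (hf : ContDiff ℝ (⊤ : ℕ∞) f)
    (hper : PeriodicX M f) (j : ℕ) :
    PeriodicX M (fun p => ‖iteratedFDeriv ℝ j f p‖^2) := by
  intro x z
  have h2 : iteratedFDeriv ℝ j f ((x, z) + (2*Real.pi*M, 0)) = iteratedFDeriv ℝ j f (x, z) := by
    rw [← iteratedFDeriv_translate hf (2*Real.pi*M, 0) j (x, z)]
    congr 1
    funext y
    show f (y + (2*Real.pi*M, 0)) = f y
    have hy : y + ((2*Real.pi*M : ℝ), (0:ℝ)) = (y.1 + 2*Real.pi*M, y.2) := by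
      simp [Prod.ext_iff]
    rw [hy, hper]
  have hxz : ((x + 2*Real.pi*M, z) : ℝ × ℝ) = (x, z) + (2*Real.pi*M, 0) := by
    simp [Prod.ext_iff]
  show ‖iteratedFDeriv ℝ j f (x + 2*Real.pi*M, z)‖^2 = ‖iteratedFDeriv ℝ j f (x, z)‖^2
  rw [hxz, h2]

set_option maxHeartbeats 1000000 in
/-- Core estimate: the `H^K` norm of `g ∘ σ_t` is polynomially bounded. -/
lemma comp_bound (hM : 0 < M) {U : ℝ → ℝ} (hU : ContDiff ℝ (⊤ : ℕ∞) U) (K : ℕ) :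
    ∃ A : ℝ, 1 ≤ A ∧ ∀ t : ℝ, 0 ≤ t → ∀ g : ℝ × ℝ → ℝ, ContDiff ℝ (⊤ : ℕ∞) g → PeriodicX M g →
      Hnorm M K (fun p => g (p.1 - t * U p.2, p.2)) ≤
        ((K+1) * K.factorial * (1 + A*t)^K) * Hnorm M K g := by
  have hUc : ∀ i : ℕ, ∃ b : ℝ, ∀ z ∈ Icc (-1:ℝ) 1, ‖iteratedFDeriv ℝ i U z‖ ≤ b := fun i =>
    isCompact_Icc.exists_bound_of_continuousOn
      ((hU.continuous_iteratedFDeriv (by exact_mod_cast le_top)).continuousOn)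
  choose B hB using hUc
  set A : ℝ := 1 + ∑ i ∈ Finset.range (K+1), |B i| with hAdef
  have hsumB : 0 ≤ ∑ i ∈ Finset.range (K+1), |B i| :=
    Finset.sum_nonneg fun i _ => abs_nonneg _
  have hA1 : 1 ≤ A := by simp only [hAdef]; linarith
  have hA0 : 0 ≤ A := by linarith
  have hBA : ∀ i, i ≤ K → ∀ z ∈ Icc (-1:ℝ) 1, ‖iteratedFDeriv ℝ i U z‖ ≤ A := by
    intro i hi z hz
    calc ‖iteratedFDeriv ℝ i U z‖ ≤ B i := hB i z hz
      _ ≤ |B i| := le_abs_self _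
      _ ≤ ∑ j ∈ Finset.range (K+1), |B j| :=
          Finset.single_le_sum (f := fun j => |B j|) (fun j _ => abs_nonneg _)
            (Finset.mem_range.mpr (by omega))
      _ ≤ A := by simp only [hAdef]; linarith
  refine ⟨A, hA1, fun t ht g hg hper => ?_⟩
  set σ : ℝ × ℝ → ℝ × ℝ := fun p => (p.1 - t * U p.2, p.2) with hσdef
  have hσ : ContDiff ℝ (⊤ : ℕ∞) σ :=
    (contDiff_fst.sub (contDiff_const.mul (hU.comp contDiff_snd))).prodMk contDiff_snd
  set D : ℝ := 1 + A * t with hDdef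
  have hD1 : 1 ≤ D := by nlinarith
  have hD0 : 0 ≤ D := by linarith
  have hmeas : MeasurableSet (channel M) := measurableSet_Ioo.prod measurableSet_Ioo
  have hσbound : ∀ i : ℕ, 1 ≤ i → i ≤ K → ∀ p : ℝ × ℝ, p ∈ channel M →
      ‖iteratedFDeriv ℝ i σ p‖ ≤ D ^ i := by
    intro i h1 hK p hp
    have hp2 : p.2 ∈ Icc (-1:ℝ) 1 := Ioo_subset_Icc_self hp.2
    calc ‖iteratedFDeriv ℝ i σ p‖ ≤ 1 + A * t :=
          sigma_deriv_bound ht hU h1 (hBA i hK) p hp2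
      _ = D := hDdef.symm
      _ ≤ D ^ i := le_self_pow₀ hD1 (by omega)
  set Sg : ℝ := ∑ j ∈ Finset.range (K+1), ∫ p in channel M, ‖iteratedFDeriv ℝ j g p‖^2
    with hSgdef
  have hSg0 : 0 ≤ Sg := Hsum_nonneg M K g
  have hintj : ∀ j : ℕ, Continuous fun p : ℝ × ℝ => ‖iteratedFDeriv ℝ j g (σ p)‖^2 := fun j =>
    (((hg.continuous_iteratedFDeriv (by exact_mod_cast le_top)).comp hσ.continuous).norm).pow 2
  have main : ∀ n ∈ Finset.range (K+1),
      ∫ p in channel M, ‖iteratedFDeriv ℝ n (g ∘ σ) p‖^2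
        ≤ ((n.factorial : ℝ) * D^n)^2 * Sg := by
    intro n hn
    rw [Finset.mem_range] at hn
    have hnK : n ≤ K := by omega
    have hpt : ∀ p ∈ channel M, ‖iteratedFDeriv ℝ n (g ∘ σ) p‖^2
        ≤ ((n.factorial : ℝ) * D^n)^2
          * ∑ j ∈ Finset.range (K+1), ‖iteratedFDeriv ℝ j g (σ p)‖^2 := by
      intro p hp
      set S := ∑ j ∈ Finset.range (K+1), ‖iteratedFDeriv ℝ j g (σ p)‖^2 with hS
      have hS0 : 0 ≤ S := Finset.sum_nonneg fun j _ => by positivity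
      have hC : ∀ j, j ≤ n → ‖iteratedFDeriv ℝ j g (σ p)‖ ≤ Real.sqrt S := by
        intro j hj
        rw [show ‖iteratedFDeriv ℝ j g (σ p)‖
            = Real.sqrt (‖iteratedFDeriv ℝ j g (σ p)‖^2) from
          (Real.sqrt_sq (norm_nonneg _)).symm]
        exact Real.sqrt_le_sqrt (Finset.single_le_sum
          (f := fun j => ‖iteratedFDeriv ℝ j g (σ p)‖^2)
          (fun j _ => by positivity) (Finset.mem_range.mpr (by omega)))
      have hcomp := norm_iteratedFDeriv_comp_le hg hσ (by exact_mod_cast le_top) p hC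
        (fun i h1 h2 => hσbound i h1 (le_trans h2 hnK) p hp)
      calc ‖iteratedFDeriv ℝ n (g ∘ σ) p‖^2
          ≤ ((n.factorial : ℝ) * Real.sqrt S * D^n)^2 :=
            pow_le_pow_left₀ (norm_nonneg _) hcomp 2
        _ = ((n.factorial : ℝ) * D^n)^2 * S := by
            rw [mul_pow, mul_pow, mul_pow, Real.sq_sqrt hS0]; ring
    have hint1 : IntegrableOn (fun p => ‖iteratedFDeriv ℝ n (g ∘ σ) p‖^2) (channel M) :=
      integrableOn_channel ((((hg.comp hσ).continuous_iteratedFDeriv (by exact_mod_cast le_top)).norm).pow 2)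
    have hint2 : IntegrableOn (fun p => ((n.factorial : ℝ) * D^n)^2
        * ∑ j ∈ Finset.range (K+1), ‖iteratedFDeriv ℝ j g (σ p)‖^2) (channel M) :=
      integrableOn_channel (continuous_const.mul
        (continuous_finset_sum _ fun j _ => hintj j))
    calc ∫ p in channel M, ‖iteratedFDeriv ℝ n (g ∘ σ) p‖^2
        ≤ ∫ p in channel M, ((n.factorial : ℝ) * D^n)^2
            * ∑ j ∈ Finset.range (K+1), ‖iteratedFDeriv ℝ j g (σ p)‖^2 :=
          setIntegral_mono_on hint1 hint2 hmeas hpt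
      _ = ((n.factorial : ℝ) * D^n)^2
            * ∫ p in channel M, ∑ j ∈ Finset.range (K+1), ‖iteratedFDeriv ℝ j g (σ p)‖^2 :=
          integral_const_mul _ _
      _ = ((n.factorial : ℝ) * D^n)^2
            * ∑ j ∈ Finset.range (K+1), ∫ p in channel M, ‖iteratedFDeriv ℝ j g (σ p)‖^2 := by
          rw [integral_finset_sum _ (fun j _ => integrableOn_channel (hintj j))]
      _ = ((n.factorial : ℝ) * D^n)^2 * Sg := by
          congr 1
          refine Finset.sum_congr rfl (fun j _ => ?_)
          exact shift_integral hM (g := fun q => ‖iteratedFDeriv ℝ j g q‖^2)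
            (c := fun z => t * U z) (((hg.continuous_iteratedFDeriv (by exact_mod_cast le_top)).norm).pow 2)
            (periodic_norm_iteratedFDeriv hg hper j) (continuous_const.mul hU.continuous)
  have hEn : ∀ n ∈ Finset.range (K+1),
      ((n.factorial : ℝ) * D^n)^2 * Sg ≤ ((K.factorial : ℝ) * D^K)^2 * Sg := by
    intro n hn
    rw [Finset.mem_range] at hn
    have h1 : ((n.factorial : ℝ) * D^n) ≤ ((K.factorial : ℝ) * D^K) := by
      have hf : (n.factorial : ℝ) ≤ K.factorial := by
        exact_mod_cast Nat.factorial_le (by omega)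
      have hp : D^n ≤ D^K := pow_le_pow_right₀ hD1 (by omega)
      have := mul_le_mul hf hp (by positivity) (by positivity)
      exact this
    have h2 : ((n.factorial : ℝ) * D^n)^2 ≤ ((K.factorial : ℝ) * D^K)^2 :=
      pow_le_pow_left₀ (by positivity) h1 2
    exact mul_le_mul_of_nonneg_right h2 hSg0
  have hsum : ∑ n ∈ Finset.range (K+1), ∫ p in channel M, ‖iteratedFDeriv ℝ n (g ∘ σ) p‖^2
      ≤ (K+1) * (((K.factorial : ℝ) * D^K)^2 * Sg) := by
    calc ∑ n ∈ Finset.range (K+1), ∫ p in channel M, ‖iteratedFDeriv ℝ n (g ∘ σ) p‖^2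
        ≤ ∑ n ∈ Finset.range (K+1), ((K.factorial : ℝ) * D^K)^2 * Sg :=
          Finset.sum_le_sum (fun n hn => (main n hn).trans (hEn n hn))
      _ = (K+1) * (((K.factorial : ℝ) * D^K)^2 * Sg) := by
          rw [Finset.sum_const, Finset.card_range]
          push_cast
          ring
  have hfun : (fun p : ℝ × ℝ => g (p.1 - t * U p.2, p.2)) = g ∘ σ := rfl
  rw [hfun]
  have hQ0 : (0:ℝ) ≤ ((K:ℝ)+1) * K.factorial * D^K := by positivity
  calc Hnorm M K (g ∘ σ)
      = Real.sqrt (∑ n ∈ Finset.range (K+1),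
          ∫ p in channel M, ‖iteratedFDeriv ℝ n (g ∘ σ) p‖^2) := rfl
    _ ≤ Real.sqrt ((K+1) * (((K.factorial : ℝ) * D^K)^2 * Sg)) := Real.sqrt_le_sqrt hsum
    _ ≤ Real.sqrt ((((K:ℝ)+1) * K.factorial * D^K)^2 * Sg) := by
        apply Real.sqrt_le_sqrt
        have h1 : ((K:ℝ)+1) * (((K.factorial : ℝ) * D^K)^2 * Sg)
            = (((K:ℝ)+1) * ((K.factorial : ℝ) * D^K)^2) * Sg := by ring
        have h2 : (((K:ℝ)+1) * K.factorial * D^K)^2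
            = ((K:ℝ)+1)^2 * ((K.factorial : ℝ) * D^K)^2 := by ring
        rw [h1, h2]
        apply mul_le_mul_of_nonneg_right _ hSg0
        have hK1 : (1:ℝ) ≤ (K:ℝ)+1 := by
          have := Nat.cast_nonneg (α := ℝ) K; linarith
        nlinarith [sq_nonneg ((K.factorial : ℝ) * D^K), Nat.cast_nonneg (α := ℝ) K]
    _ = (((K:ℝ)+1) * K.factorial * D^K) * Real.sqrt Sg := by
        rw [Real.sqrt_mul (by positivity), Real.sqrt_sq hQ0]
    _ = (((K:ℝ)+1) * K.factorial * D^K) * Hnorm M K g := by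
        rw [Hnorm, ← hSgdef]

lemma Hnorm_partialX_le (k : ℕ) {f : ℝ × ℝ → ℝ} (hf : ContDiff ℝ (⊤ : ℕ∞) f) :
    Hnorm M k (partialX f) ≤ Hnorm M (k+1) f := by
  have hd : Differentiable ℝ f := hf.differentiable (by simp)
  have hfd : ContDiff ℝ (⊤ : ℕ∞) (fderiv ℝ f) := hf.fderiv_right (by simp)
  have hpx : partialX f = fun p => fderiv ℝ f p (1, 0) :=
    funext fun p => partialX_eq (hd p)
  have hpt : ∀ (i : ℕ) (p : ℝ × ℝ),
      ‖iteratedFDeriv ℝ i (partialX f) p‖ ≤ ‖iteratedFDeriv ℝ (i+1) f p‖ := by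
    intro i p
    rw [hpx]
    have h1 : ‖iteratedFDeriv ℝ i (fun p => fderiv ℝ f p (1, 0)) p‖
        ≤ ‖((1:ℝ), (0:ℝ))‖ * ‖iteratedFDeriv ℝ i (fderiv ℝ f) p‖ :=
      norm_iteratedFDeriv_clm_apply_const hfd.contDiffAt (by exact_mod_cast le_top)
    have h2 : ‖((1:ℝ), (0:ℝ))‖ = 1 := by
      simp [Prod.norm_def]
    rw [h2, one_mul] at h1
    rw [norm_iteratedFDeriv_fderiv] at h1
    exact h1
  have hcont : Continuous (partialX f) := (contDiff_partialX hf).continuous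
  apply Real.sqrt_le_sqrt
  calc ∑ i ∈ Finset.range (k+1), ∫ p in channel M, ‖iteratedFDeriv ℝ i (partialX f) p‖^2
      ≤ ∑ i ∈ Finset.range (k+1), ∫ p in channel M, ‖iteratedFDeriv ℝ (i+1) f p‖^2 := by
        refine Finset.sum_le_sum (fun i _ => ?_)
        refine setIntegral_mono_on
          (integrableOn_channel
            ((((contDiff_partialX hf).continuous_iteratedFDeriv (by exact_mod_cast le_top)).norm).pow 2))
          (integrableOn_channel (((hf.continuous_iteratedFDeriv (by exact_mod_cast le_top)).norm).pow 2))
          (measurableSet_Ioo.prod measurableSet_Ioo) (fun p _ => ?_)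
        exact pow_le_pow_left₀ (norm_nonneg _) (hpt i p) 2
    _ ≤ ∑ i ∈ Finset.range (k+1+1), ∫ p in channel M, ‖iteratedFDeriv ℝ i f p‖^2 := by
        rw [Finset.sum_range_succ'
          (fun i => ∫ p in channel M, ‖iteratedFDeriv ℝ i f p‖^2) (k+1)]
        exact le_add_of_nonneg_right (integral_nonneg (fun p => by positivity))

lemma Hnorm_two (k : ℕ) {t : ℝ} (ht : 0 ≤ t) {f g : ℝ × ℝ → ℝ}
    (hf : ContDiff ℝ (⊤ : ℕ∞) f) (hg : ContDiff ℝ (⊤ : ℕ∞) g) :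
    Hnorm M k (fun p => f p + t * g p) ≤ 2 * Hnorm M k f + 2 * (t * Hnorm M k g) := by
  have hsmooth : ContDiff ℝ (⊤ : ℕ∞) (fun p => f p + t * g p) := hf.add (contDiff_const.mul hg)
  have hpt : ∀ (i : ℕ) (p : ℝ × ℝ),
      ‖iteratedFDeriv ℝ i (fun p => f p + t * g p) p‖^2
        ≤ 2 * ‖iteratedFDeriv ℝ i f p‖^2 + 2 * t^2 * ‖iteratedFDeriv ℝ i g p‖^2 := by
    intro i p
    have h1 : (fun p : ℝ × ℝ => f p + t * g p) = fun p => f p + (t • g) p := by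
      funext q; simp
    rw [h1, iteratedFDeriv_add_apply' (hf.of_le (by exact_mod_cast le_top)).contDiffAt
      (by exact ((hg.of_le (by exact_mod_cast le_top)).const_smul t).contDiffAt),
      iteratedFDeriv_const_smul_apply (hg.of_le (by exact_mod_cast le_top)).contDiffAt]
    have hna := norm_add_le (iteratedFDeriv ℝ i f p) (t • iteratedFDeriv ℝ i g p)
    have hns : ‖t • iteratedFDeriv ℝ i g p‖ = t * ‖iteratedFDeriv ℝ i g p‖ := by
      rw [norm_smul t (iteratedFDeriv ℝ i g p), Real.norm_eq_abs, abs_of_nonneg ht]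
    rw [hns] at hna
    have h2 : ‖iteratedFDeriv ℝ i f p + t • iteratedFDeriv ℝ i g p‖^2
        ≤ (‖iteratedFDeriv ℝ i f p‖ + t * ‖iteratedFDeriv ℝ i g p‖)^2 :=
      pow_le_pow_left₀ (norm_nonneg _) hna 2
    nlinarith [norm_nonneg (iteratedFDeriv ℝ i f p), norm_nonneg (iteratedFDeriv ℝ i g p),
      sq_nonneg (‖iteratedFDeriv ℝ i f p‖ - t * ‖iteratedFDeriv ℝ i g p‖)]
  set Sf : ℝ := ∑ i ∈ Finset.range (k+1), ∫ p in channel M, ‖iteratedFDeriv ℝ i f p‖^2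
    with hSf
  set Sg : ℝ := ∑ i ∈ Finset.range (k+1), ∫ p in channel M, ‖iteratedFDeriv ℝ i g p‖^2
    with hSg
  have hSf0 : 0 ≤ Sf := Hsum_nonneg M k f
  have hSg0 : 0 ≤ Sg := Hsum_nonneg M k g
  have hsum : ∑ i ∈ Finset.range (k+1),
      ∫ p in channel M, ‖iteratedFDeriv ℝ i (fun p => f p + t * g p) p‖^2
        ≤ 2 * Sf + 2 * t^2 * Sg := by
    rw [hSf, hSg, Finset.mul_sum, Finset.mul_sum, ← Finset.sum_add_distrib]
    refine Finset.sum_le_sum (fun i _ => ?_)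
    calc ∫ p in channel M, ‖iteratedFDeriv ℝ i (fun p => f p + t * g p) p‖^2
        ≤ ∫ p in channel M,
            (2 * ‖iteratedFDeriv ℝ i f p‖^2 + 2 * t^2 * ‖iteratedFDeriv ℝ i g p‖^2) := by
          refine setIntegral_mono_on
            (integrableOn_channel (((hsmooth.continuous_iteratedFDeriv (by exact_mod_cast le_top)).norm).pow 2))
            (integrableOn_channel (((continuous_const.mul
                (((hf.continuous_iteratedFDeriv (by exact_mod_cast le_top)).norm).pow 2)).add
              (continuous_const.mul
                (((hg.continuous_iteratedFDeriv (by exact_mod_cast le_top)).norm).pow 2)))))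
            (measurableSet_Ioo.prod measurableSet_Ioo) (fun p _ => hpt i p)
      _ = 2 * (∫ p in channel M, ‖iteratedFDeriv ℝ i f p‖^2)
            + 2 * t^2 * ∫ p in channel M, ‖iteratedFDeriv ℝ i g p‖^2 := by
          rw [integral_add (f := fun p => 2 * ‖iteratedFDeriv ℝ i f p‖^2)
              (g := fun p => 2 * t^2 * ‖iteratedFDeriv ℝ i g p‖^2)
            (Integrable.const_mul
              (integrableOn_channel (((hf.continuous_iteratedFDeriv (by exact_mod_cast le_top)).norm).pow 2)) _)
            (Integrable.const_mul
              (integrableOn_channel (((hg.continuous_iteratedFDeriv (by exact_mod_cast le_top)).norm).pow 2)) _),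
            integral_const_mul, integral_const_mul]
  calc Hnorm M k (fun p => f p + t * g p)
      ≤ Real.sqrt (2 * Sf + 2 * t^2 * Sg) := Real.sqrt_le_sqrt hsum
    _ ≤ Real.sqrt (2 * Sf) + Real.sqrt (2 * t^2 * Sg) :=
        sqrt_add_le' _ _ (by positivity) (by positivity)
    _ ≤ 2 * Hnorm M k f + 2 * (t * Hnorm M k g) := by
        have e1 : Real.sqrt (2 * Sf) ≤ 2 * Real.sqrt Sf := by
          have h : 2 * Sf ≤ (2 * Real.sqrt Sf)^2 := by
            have := Real.sq_sqrt hSf0; nlinarith [Real.sqrt_nonneg Sf]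
          have := Real.sqrt_le_sqrt h
          rwa [Real.sqrt_sq (by positivity)] at this
        have e2 : Real.sqrt (2 * t^2 * Sg) ≤ 2 * (t * Real.sqrt Sg) := by
          have h : 2 * t^2 * Sg ≤ (2 * (t * Real.sqrt Sg))^2 := by
            have := Real.sq_sqrt hSg0; nlinarith [Real.sqrt_nonneg Sg, sq_nonneg t]
          have := Real.sqrt_le_sqrt h
          rwa [Real.sqrt_sq (by positivity)] at this
        have hf' : Hnorm M k f = Real.sqrt Sf := rfl
        have hg' : Hnorm M k g = Real.sqrt Sg := rfl
        rw [hf', hg']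
        linarith

end Aux
/-- **The transport operator `B₀(ϱ,ω) = (-U_s ∂_x ϱ, -U_s ∂_x ω + ∂_x ϱ)` generates a
strongly continuous semigroup**, given explicitly by
`e^{tB₀}(ϱ,ω)(x,z) = (ϱ(x-tU_s(z),z), ω(x-tU_s(z),z) + t ∂_x ϱ(x-tU_s(z),z))`:
it satisfies `e^{0·B₀} = Id`, the semigroup law, strong (time-)continuity, the
generator identity at `t = 0`, and for every `β > 0`, `k ≥ 0` the growth bound
`‖e^{tB₀}(ϱ,ω)‖_{H^{k+1}×H^k} ≤ C_{k,β} e^{βt} ‖(ϱ,ω)‖_{H^{k+1}×H^k}`. -/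
theorem B0_semigroup (M : ℝ) (hM : 0 < M) (U : ℝ → ℝ) (hU : ContDiff ℝ (⊤ : ℕ∞) U) :
    -- identity at time zero
    (∀ (ϱ ω : ℝ × ℝ → ℝ) (p : ℝ × ℝ), Eρ U 0 ϱ p = ϱ p ∧ Eω U 0 ϱ ω p = ω p) ∧
    -- semigroup law
    (∀ s t : ℝ, 0 ≤ s → 0 ≤ t → ∀ (ϱ ω : ℝ × ℝ → ℝ) (p : ℝ × ℝ),
      Eρ U (s+t) ϱ p = Eρ U s (Eρ U t ϱ) p ∧
      Eω U (s+t) ϱ ω p = Eω U s (Eρ U t ϱ) (Eω U t ϱ ω) p) ∧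
    -- strong continuity and the generator `B₀` at `t = 0`, on smooth data
    (∀ (ϱ ω : ℝ × ℝ → ℝ), ContDiff ℝ (⊤ : ℕ∞) ϱ → ContDiff ℝ (⊤ : ℕ∞) ω → ∀ p : ℝ × ℝ,
      Continuous (fun t => Eρ U t ϱ p) ∧ Continuous (fun t => Eω U t ϱ ω p) ∧
      HasDerivAt (fun t => Eρ U t ϱ p) (-(U p.2) * partialX ϱ p) 0 ∧
      HasDerivAt (fun t => Eω U t ϱ ω p) (-(U p.2) * partialX ω p + partialX ϱ p) 0) ∧
    -- exponential growth bound in `H^{k+1} × H^k` for every rate `β > 0`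
    (∀ β : ℝ, 0 < β → ∀ k : ℕ, ∃ C : ℝ, 0 < C ∧
      ∀ t : ℝ, 0 ≤ t → ∀ (ϱ ω : ℝ × ℝ → ℝ),
        ContDiff ℝ (⊤ : ℕ∞) ϱ → ContDiff ℝ (⊤ : ℕ∞) ω → PeriodicX M ϱ → PeriodicX M ω →
        Hnorm M (k+1) (Eρ U t ϱ) + Hnorm M k (Eω U t ϱ ω) ≤
          C * Real.exp (β * t) * (Hnorm M (k+1) ϱ + Hnorm M k ω)) := by
  constructor
  · -- identity at time zero
    intro ϱ ω p
    constructor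
    · simp [Eρ]
    · simp [Eω]
  constructor
  · -- semigroup law
    intro s t hs ht ϱ ω p
    have harg : p.1 - (s+t) * U p.2 = p.1 - s * U p.2 - t * U p.2 := by ring
    constructor
    · simp only [Eρ]
      rw [harg]
    · simp only [Eω, Eρ, partialX]
      have hd : deriv (fun x => ϱ (x - t * U p.2, p.2)) (p.1 - s * U p.2)
          = deriv (fun x => ϱ (x, p.2)) (p.1 - s * U p.2 - t * U p.2) :=
        deriv_comp_sub_const (fun x => ϱ (x, p.2)) (t * U p.2) (p.1 - s * U p.2)
      rw [harg, hd]
      ring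
  constructor
  · -- strong continuity and generator
    intro ϱ ω hϱ hω p
    have hcurve : Continuous (fun t : ℝ => ((p.1 - t * U p.2 : ℝ), (p.2 : ℝ))) :=
      (continuous_const.sub (continuous_id.mul continuous_const)).prodMk continuous_const
    have hgen : ∀ (f : ℝ × ℝ → ℝ), ContDiff ℝ (⊤ : ℕ∞) f →
        HasDerivAt (fun t : ℝ => f (p.1 - t * U p.2, p.2)) (-(U p.2) * partialX f p) 0 := by
      intro f hf
      have h0 : HasDerivAt (fun t : ℝ => t * U p.2) (U p.2) 0 := hasDerivAt_mul_const (U p.2)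
      have h1 : HasDerivAt (fun t : ℝ => p.1 - t * U p.2) (-(U p.2)) 0 := h0.const_sub p.1
      have hcv : HasDerivAt (fun t : ℝ => ((p.1 - t * U p.2 : ℝ), (p.2 : ℝ)))
          ((-(U p.2), 0)) 0 := h1.prodMk (hasDerivAt_const 0 p.2)
      have hpt : ((p.1 - 0 * U p.2 : ℝ), (p.2 : ℝ)) = p := by simp
      have hfd : HasFDerivAt f (fderiv ℝ f p) ((p.1 - 0 * U p.2 : ℝ), (p.2 : ℝ)) := by
        rw [hpt]
        exact ((hf.differentiable (by simp)) p).hasFDerivAt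
      have hc := hfd.comp_hasDerivAt 0 hcv
      have heq : fderiv ℝ f p ((-(U p.2), 0)) = -(U p.2) * partialX f p := by
        rw [partialX_eq ((hf.differentiable (by simp)) p)]
        have h2 : ((-(U p.2) : ℝ), (0:ℝ)) = (-(U p.2)) • ((1:ℝ), (0:ℝ)) := by simp
        rw [h2, ContinuousLinearMap.map_smul]
        simp
      rwa [heq] at hc
    refine ⟨?_, ?_, ?_, ?_⟩
    · show Continuous fun t => ϱ (p.1 - t * U p.2, p.2)
      exact hϱ.continuous.comp hcurve
    · show Continuous fun t =>
        ω (p.1 - t * U p.2, p.2) + t * partialX ϱ (p.1 - t * U p.2, p.2)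
      exact (hω.continuous.comp hcurve).add
        (continuous_id.mul ((contDiff_partialX hϱ).continuous.comp hcurve))
    · exact hgen ϱ hϱ
    · show HasDerivAt
        (fun t => ω (p.1 - t * U p.2, p.2) + t * partialX ϱ (p.1 - t * U p.2, p.2))
        (-(U p.2) * partialX ω p + partialX ϱ p) 0
      have hω1 := hgen ω hω
      have hg1 := hgen (partialX ϱ) (contDiff_partialX hϱ)
      have hmul := (hasDerivAt_id (0:ℝ)).mul hg1
      have hsum := hω1.add hmul
      have hpt : ((p.1 - 0 * U p.2 : ℝ), (p.2 : ℝ)) = p := by simp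
      simp only [hpt, zero_mul, one_mul, mul_zero, add_zero, zero_add, id_eq] at hsum
      convert hsum using 1
      · rfl
      · rfl
      · rfl
      · simp
  · -- growth bound
    intro β hβ k
    obtain ⟨A1, hA11, hbound1⟩ := comp_bound hM hU (k+1)
    obtain ⟨A2, hA21, hbound2⟩ := comp_bound hM hU k
    set A' : ℝ := max A1 A2 with hA'def
    have hA'1 : 1 ≤ A' := le_trans hA11 (le_max_left _ _)
    have hA'0 : 0 ≤ A' := by linarith
    obtain ⟨C0, hC00, hC0⟩ := growth_aux hβ (k+2) hA'0
    have hfac1 : (0:ℝ) < ((k+1).factorial : ℝ) := by exact_mod_cast (k+1).factorial_pos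
    have hfac2 : (0:ℝ) < (k.factorial : ℝ) := by exact_mod_cast k.factorial_pos
    have hk0 : (0:ℝ) ≤ (k : ℝ) := Nat.cast_nonneg k
    set c1 : ℝ := (((k+1 : ℕ) : ℝ) + 1) * ((k+1).factorial : ℝ) with hc1def
    set c2 : ℝ := ((k : ℝ) + 1) * (k.factorial : ℝ) with hc2def
    have hc10 : 0 < c1 := by
      have : (0:ℝ) < ((k+1 : ℕ) : ℝ) + 1 := by positivity
      exact mul_pos this hfac1
    have hc20 : 0 < c2 := by
      have : (0:ℝ) < (k : ℝ) + 1 := by positivity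
      exact mul_pos this hfac2
    refine ⟨(c1 + 4*c2) * C0, by positivity, ?_⟩
    intro t ht ϱ ω hϱ hω hpϱ hpω
    set P : ℝ := (1 + A'*t)^(k+2) with hPdef
    have hbA1 : (0:ℝ) ≤ 1 + A1 * t := by nlinarith
    have hbA2 : (0:ℝ) ≤ 1 + A2 * t := by nlinarith
    have hbA' : (1:ℝ) ≤ 1 + A' * t := by nlinarith
    have hmono1 : 1 + A1 * t ≤ 1 + A' * t := by
      have := mul_le_mul_of_nonneg_right (le_max_left A1 A2) ht
      linarith
    have hmono2 : 1 + A2 * t ≤ 1 + A' * t := by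
      have := mul_le_mul_of_nonneg_right (le_max_right A1 A2) ht
      linarith
    have hP1 : (1 + A1*t)^(k+1) ≤ P := by
      calc (1 + A1*t)^(k+1) ≤ (1 + A'*t)^(k+1) := pow_le_pow_left₀ hbA1 hmono1 (k+1)
        _ ≤ P := pow_le_pow_right₀ hbA' (by omega)
    have hP2 : (1 + A2*t)^k ≤ P := by
      calc (1 + A2*t)^k ≤ (1 + A'*t)^k := pow_le_pow_left₀ hbA2 hmono2 k
        _ ≤ P := pow_le_pow_right₀ hbA' (by omega)
    have hP3 : t * (1 + A2*t)^k ≤ P := by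
      have htle : t ≤ 1 + A' * t := by nlinarith
      have h1 : (1 + A2*t)^k ≤ (1 + A'*t)^(k+1) := by
        calc (1 + A2*t)^k ≤ (1 + A'*t)^k := pow_le_pow_left₀ hbA2 hmono2 k
          _ ≤ (1 + A'*t)^(k+1) := pow_le_pow_right₀ hbA' (by omega)
      calc t * (1 + A2*t)^k ≤ (1 + A'*t) * (1 + A'*t)^(k+1) :=
            mul_le_mul htle h1 (by positivity) (by linarith)
        _ = P := by rw [hPdef]; ring
    have hP0 : 0 ≤ P := by positivity
    set Hp : ℝ := Hnorm M (k+1) ϱ with hHp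
    set Hw : ℝ := Hnorm M k ω with hHw
    have hHp0 : 0 ≤ Hp := Hnorm_nonneg M (k+1) ϱ
    have hHw0 : 0 ≤ Hw := Hnorm_nonneg M k ω
    -- bound for the first component
    have hρ : Hnorm M (k+1) (Eρ U t ϱ) ≤ c1 * (1 + A1*t)^(k+1) * Hp :=
      hbound1 t ht ϱ hϱ hpϱ
    have hρ' : Hnorm M (k+1) (Eρ U t ϱ) ≤ c1 * P * Hp := by
      refine hρ.trans ?_
      exact mul_le_mul_of_nonneg_right (mul_le_mul_of_nonneg_left hP1 hc10.le) hHp0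
    -- bound for the second component
    have hσs : ContDiff ℝ (⊤ : ℕ∞) (fun p : ℝ × ℝ => ((p.1 - t * U p.2 : ℝ), (p.2 : ℝ))) :=
      (contDiff_fst.sub (contDiff_const.mul (hU.comp contDiff_snd))).prodMk contDiff_snd
    have hωcomp : ContDiff ℝ (⊤ : ℕ∞) (fun p : ℝ × ℝ => ω (p.1 - t * U p.2, p.2)) := hω.comp hσs
    have hpxcomp : ContDiff ℝ (⊤ : ℕ∞) (fun p : ℝ × ℝ => partialX ϱ (p.1 - t * U p.2, p.2)) :=
      (contDiff_partialX hϱ).comp hσs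
    have hEω2 : Hnorm M k (Eω U t ϱ ω)
        ≤ 2 * Hnorm M k (fun p : ℝ × ℝ => ω (p.1 - t * U p.2, p.2))
          + 2 * (t * Hnorm M k (fun p : ℝ × ℝ => partialX ϱ (p.1 - t * U p.2, p.2))) :=
      Hnorm_two k ht hωcomp hpxcomp
    have hm1 : Hnorm M k (fun p : ℝ × ℝ => ω (p.1 - t * U p.2, p.2)) ≤ c2 * P * Hw := by
      refine (hbound2 t ht ω hω hpω).trans ?_
      exact mul_le_mul_of_nonneg_right (mul_le_mul_of_nonneg_left hP2 hc20.le) hHw0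
    have hm2 : t * Hnorm M k (fun p : ℝ × ℝ => partialX ϱ (p.1 - t * U p.2, p.2))
        ≤ c2 * P * Hp := by
      have hstep1 : Hnorm M k (fun p : ℝ × ℝ => partialX ϱ (p.1 - t * U p.2, p.2))
          ≤ c2 * (1 + A2*t)^k * Hp := by
        refine (hbound2 t ht (partialX ϱ) (contDiff_partialX hϱ)
          (periodicX_partialX hpϱ)).trans ?_
        have := Hnorm_partialX_le (M := M) k hϱ
        exact mul_le_mul_of_nonneg_left this (by positivity)
      calc t * Hnorm M k (fun p : ℝ × ℝ => partialX ϱ (p.1 - t * U p.2, p.2))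
          ≤ t * (c2 * (1 + A2*t)^k * Hp) := mul_le_mul_of_nonneg_left hstep1 ht
        _ = c2 * (t * (1 + A2*t)^k) * Hp := by ring
        _ ≤ c2 * P * Hp := by
            exact mul_le_mul_of_nonneg_right (mul_le_mul_of_nonneg_left hP3 hc20.le) hHp0
    have hEω' : Hnorm M k (Eω U t ϱ ω) ≤ 2 * (c2 * P * Hw) + 2 * (c2 * P * Hp) := by
      have := mul_le_mul_of_nonneg_left hm1 (by norm_num : (0:ℝ) ≤ 2)
      have := mul_le_mul_of_nonneg_left hm2 (by norm_num : (0:ℝ) ≤ 2)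
      linarith
    have key : Hnorm M (k+1) (Eρ U t ϱ) + Hnorm M k (Eω U t ϱ ω)
        ≤ (c1 + 4*c2) * P * (Hp + Hw) := by
      have n1 : 0 ≤ c1 * P * Hw := by positivity
      have n2 : 0 ≤ c2 * P * Hp := by positivity
      have n3 : 0 ≤ c2 * P * Hw := by positivity
      have expand : (c1 + 4*c2) * P * (Hp + Hw)
          = c1*P*Hp + c1*P*Hw + 4*(c2*P*Hp) + 4*(c2*P*Hw) := by ring
      rw [expand]
      linarith
    refine key.trans ?_
    have hPC : P ≤ C0 * Real.exp (β*t) := hC0 t ht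
    calc (c1 + 4*c2) * P * (Hp + Hw)
        ≤ (c1 + 4*c2) * (C0 * Real.exp (β*t)) * (Hp + Hw) := by
          refine mul_le_mul_of_nonneg_right ?_ (by linarith)
          exact mul_le_mul_of_nonneg_left hPC (by positivity)
      _ = (c1 + 4*c2) * C0 * Real.exp (β*t) * (Hp + Hw) := by ring
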